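/- Quasi-optimality of the Schur-complement objective: let Π be a set, and for each π ∈ Π let F^π be a symmetric PSD block matrix with F^π_kk ≻ 0 and F^π_k̄k̄ ≻ 0. Define B_QOED(π) = tr(F^π_kk − F^π_kk̄ (F^π_k̄k̄)^{-1} F^π_k̄k) and B_BOED(π) = tr(F^π). Suppose η = sup_π tr(F^π_k̄k̄)/tr(F^π_kk) < ∞ and β = sup_π ||(F^π_kk)^{-1/2} F^π_kk̄ (F^π_k̄k̄)^{-1/2}||₂² < 1. If π̂ maximizes B_QOED over Π and π* maximizes B_BOED over Π, then tr(F^π̂) ≥ ((1−β)/(1+η)) · tr(F^π*). -/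

import Mathlib

open Matrix

open scoped ComplexOrder in
/-- The positive semidefinite square root of a positive semidefinite matrix
(the definition `Matrix.PosSemidef.sqrt` of the older Mathlib, since removed). -/
noncomputable def Matrix.PosSemidef.sqrt {n 𝕜 : Type*} [Fintype n] [RCLike 𝕜] [DecidableEq n]
    {A : Matrix n n 𝕜} (hA : A.PosSemidef) : Matrix n n 𝕜 :=
  hA.1.eigenvectorUnitary.1 * diagonal ((↑) ∘ (√·) ∘ hA.1.eigenvalues) *
  (star hA.1.eigenvectorUnitary : Matrix n n 𝕜)

theorem Matrix.isHermitian_transpose_mul_self {m n α : Type*} [Fintype m] [CommSemiring α]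
    [StarRing α] [TrivialStar α] (A : Matrix m n α) : (Aᵀ * A).IsHermitian := by
  simpa [conjTranspose_eq_transpose_of_trivial] using isHermitian_conjTranspose_mul_self A

lemma Matrix.PosSemidef.posSemidef_sqrt {n : Type*} [Fintype n] [DecidableEq n]
    {A : Matrix n n ℝ} (hA : A.PosSemidef) : hA.sqrt.PosSemidef := by
  unfold Matrix.PosSemidef.sqrt
  refine (Matrix.PosSemidef.diagonal ?_).mul_mul_conjTranspose_same
    (hA.1.eigenvectorUnitary : Matrix n n ℝ)
  rw [Pi.le_def]
  intro i
  simp [Real.sqrt_nonneg]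

lemma Matrix.PosSemidef.sqrt_mul_self {n : Type*} [Fintype n] [DecidableEq n]
    {A : Matrix n n ℝ} (hA : A.PosSemidef) : hA.sqrt * hA.sqrt = A := by
  unfold Matrix.PosSemidef.sqrt
  have hu : star (hA.1.eigenvectorUnitary : Matrix n n ℝ) * (hA.1.eigenvectorUnitary : Matrix n n ℝ)
      = 1 := (Matrix.mem_unitaryGroup_iff').mp hA.1.eigenvectorUnitary.2
  conv_rhs => rw [hA.1.spectral_theorem, Unitary.conjStarAlgAut_apply]
  set U := (hA.1.eigenvectorUnitary : Matrix n n ℝ) with hU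
  set D := diagonal (((↑) ∘ (√·) ∘ hA.1.eigenvalues) : n → ℝ) with hD
  calc U * D * star U * (U * D * star U) = U * D * (star U * U) * D * star U := by
        simp only [Matrix.mul_assoc]
    _ = U * (D * D) * star U := by rw [hu, Matrix.mul_one, Matrix.mul_assoc U D D]
    _ = _ := by
        rw [hD, diagonal_mul_diagonal]
        congr 2
        refine congrArg diagonal (funext fun i => ?_)
        simp [Real.mul_self_sqrt (hA.eigenvalues_nonneg i)]

private lemma qoed_trace_fromBlocks {n p : ℕ} (A : Matrix (Fin n) (Fin n) ℝ)
    (B : Matrix (Fin n) (Fin p) ℝ) (C : Matrix (Fin p) (Fin n) ℝ)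
    (D : Matrix (Fin p) (Fin p) ℝ) :
    (fromBlocks A B C D).trace = A.trace + D.trace := by
  simp [Matrix.trace, Fintype.sum_sum_type, Matrix.diag]

private lemma qoed_trace_nonneg {m : Type*} [Fintype m] [DecidableEq m]
    {X : Matrix m m ℝ} (h : X.PosSemidef) : 0 ≤ X.trace := by
  apply Finset.sum_nonneg
  intro i _
  have := h.dotProduct_mulVec_nonneg (Pi.single i 1)
  simpa [Matrix.diag, dotProduct, Matrix.mulVec, Pi.single_apply] using this

private lemma qoed_trace_mul_nonneg {m : Type*} [Fintype m] [DecidableEq m]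
    {X Y : Matrix m m ℝ} (hX : X.PosSemidef) (hY : Y.PosSemidef) :
    0 ≤ (X * Y).trace := by
  have hs := hX.posSemidef_sqrt
  have h1 : (hX.sqrt * Y * hX.sqrtᴴ).PosSemidef := hY.mul_mul_conjTranspose_same hX.sqrt
  rw [hs.isHermitian.eq] at h1
  calc (0:ℝ) ≤ (hX.sqrt * Y * hX.sqrt).trace := qoed_trace_nonneg h1
    _ = (X * Y).trace := by rw [trace_mul_cycle, hX.sqrt_mul_self]

private lemma qoed_smul_one_sub_psd {m : Type*} [Fintype m] [DecidableEq m]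
    {H : Matrix m m ℝ} (hH : H.IsHermitian) {β : ℝ}
    (hb : ∀ i, hH.eigenvalues i ≤ β) :
    (β • (1 : Matrix m m ℝ) - H).PosSemidef := by
  have hd : (Matrix.diagonal (fun i => β - hH.eigenvalues i)).PosSemidef :=
    Matrix.PosSemidef.diagonal (fun i => sub_nonneg.mpr (hb i))
  have h2 := hd.mul_mul_conjTranspose_same (hH.eigenvectorUnitary : Matrix m m ℝ)
  convert h2 using 1
  have hu : (hH.eigenvectorUnitary : Matrix m m ℝ) *
      (star (hH.eigenvectorUnitary : Matrix m m ℝ)) = 1 :=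
    (Matrix.mem_unitaryGroup_iff).mp hH.eigenvectorUnitary.2
  have hdiag : (Matrix.diagonal (fun i => β - hH.eigenvalues i))
      = β • (1 : Matrix m m ℝ) - Matrix.diagonal hH.eigenvalues := by
    ext i j
    by_cases hij : i = j <;>
      simp [Matrix.diagonal_apply, hij, Matrix.one_apply, Matrix.sub_apply, Matrix.smul_apply]
  rw [hdiag, Matrix.mul_sub, Matrix.sub_mul]
  simp only [Matrix.mul_smul, Matrix.smul_mul, Matrix.mul_one, ← Matrix.star_eq_conjTranspose, hu]
  congr 1
  conv_lhs => rw [hH.spectral_theorem]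
  congr 2

private lemma qoed_swap_psd {n p : ℕ} {M : Matrix (Fin n) (Fin p) ℝ} {β : ℝ} (hb : 0 ≤ β)
    (h : (β • (1 : Matrix (Fin p) (Fin p) ℝ) - Mᵀ * M).PosSemidef) :
    (β • (1 : Matrix (Fin n) (Fin n) ℝ) - M * Mᵀ).PosSemidef := by
  have dpnn : ∀ {q : ℕ} (v : Fin q → ℝ), 0 ≤ v ⬝ᵥ v := fun v =>
    Finset.sum_nonneg fun i _ => mul_self_nonneg _
  refine Matrix.PosSemidef.of_dotProduct_mulVec_nonneg ?_ ?_
  · have h1 : (M * Mᵀ).IsHermitian := by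
      rw [← Matrix.conjTranspose_eq_transpose_of_trivial]
      exact Matrix.isHermitian_mul_conjTranspose_self M
    show _ᴴ = _
    rw [Matrix.conjTranspose_sub, Matrix.conjTranspose_smul, Matrix.conjTranspose_one, h1.eq,
      star_trivial]
  · intro x
    have hq : ∀ v : Fin p → ℝ, (M *ᵥ v) ⬝ᵥ (M *ᵥ v) ≤ β * (v ⬝ᵥ v) := by
      intro v
      have := h.dotProduct_mulVec_nonneg v
      simp only [star_trivial, Matrix.sub_mulVec, Matrix.smul_mulVec,
        Matrix.one_mulVec, dotProduct_sub, dotProduct_smul,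
        smul_eq_mul, ← Matrix.mulVec_mulVec, sub_nonneg] at this
      calc (M *ᵥ v) ⬝ᵥ (M *ᵥ v) = v ⬝ᵥ (Mᵀ *ᵥ (M *ᵥ v)) := by
            rw [Matrix.dotProduct_mulVec v, Matrix.vecMul_transpose]
        _ ≤ β * (v ⬝ᵥ v) := this
    set z := Mᵀ *ᵥ x with hz
    have hzx : z = x ᵥ* M := by rw [hz, Matrix.mulVec_transpose]
    have hxq : x ⬝ᵥ ((β • (1 : Matrix (Fin n) (Fin n) ℝ) - M * Mᵀ) *ᵥ x)
        = β * (x ⬝ᵥ x) - z ⬝ᵥ z := by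
      simp only [Matrix.sub_mulVec, Matrix.smul_mulVec, Matrix.one_mulVec,
        dotProduct_sub, dotProduct_smul, smul_eq_mul,
        ← Matrix.mulVec_mulVec]
      congr 1
      rw [Matrix.dotProduct_mulVec x, ← hzx]
    rw [star_trivial, hxq, sub_nonneg]
    have hcs : (z ⬝ᵥ z) ^ 2 ≤ (x ⬝ᵥ x) * ((M *ᵥ z) ⬝ᵥ (M *ᵥ z)) := by
      have h1 : z ⬝ᵥ z = x ⬝ᵥ (M *ᵥ z) := by
        rw [Matrix.dotProduct_mulVec x, ← hzx]
      rw [h1]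
      simpa [dotProduct, pow_two] using
        Finset.sum_mul_sq_le_sq_mul_sq Finset.univ x (M *ᵥ z)
    have h2 : (M *ᵥ z) ⬝ᵥ (M *ᵥ z) ≤ β * (z ⬝ᵥ z) := hq z
    have hzz : 0 ≤ z ⬝ᵥ z := dpnn z
    have hxx : 0 ≤ x ⬝ᵥ x := dpnn x
    rcases eq_or_lt_of_le hzz with h0 | h0
    · rw [← h0]; positivity
    · nlinarith [hcs, h2, h0, hxx]

/-- Quasi-optimality of the Schur-complement (QOED) objective: if, uniformly
over policies `π`, the nuisance-information ratio is bounded by `η` and the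
squared normalized cross-coupling is bounded by `β < 1`, then a maximizer
`πhat` of the Schur-complement trace objective achieves at least a
`(1−β)/(1+η)` fraction of the optimal full-trace (BOED) objective. -/
theorem qoed_quasi_optimality
    {P : Type*} {n p : ℕ}
    (A : P → Matrix (Fin n) (Fin n) ℝ) (B : P → Matrix (Fin n) (Fin p) ℝ)
    (C : P → Matrix (Fin p) (Fin p) ℝ)
    (hF : ∀ π, (Matrix.fromBlocks (A π) (B π) (B π)ᵀ (C π)).PosSemidef)
    (hA : ∀ π, (A π).PosDef) (hC : ∀ π, (C π).PosDef)
    (M : P → Matrix (Fin n) (Fin p) ℝ)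
    (hM : ∀ π, M π = (hA π).posSemidef.sqrt⁻¹ * B π * (hC π).posSemidef.sqrt⁻¹)
    (η β : ℝ) (hη0 : 0 ≤ η) (hβ1 : β < 1)
    (hη : ∀ π, (C π).trace ≤ η * (A π).trace)
    (hβ : ∀ π,
      (⨆ i, (Matrix.isHermitian_transpose_mul_self (M π)).eigenvalues i) ≤ β)
    (πhat πstar : P)
    (hopt : ∀ π, (A π - B π * (C π)⁻¹ * (B π)ᵀ).trace ≤
      (A πhat - B πhat * (C πhat)⁻¹ * (B πhat)ᵀ).trace)
    (hstar : ∀ π, (Matrix.fromBlocks (A π) (B π) (B π)ᵀ (C π)).trace ≤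
      (Matrix.fromBlocks (A πstar) (B πstar) (B πstar)ᵀ (C πstar)).trace) :
    ((1 - β) / (1 + η)) *
        (Matrix.fromBlocks (A πstar) (B πstar) (B πstar)ᵀ (C πstar)).trace ≤
      (Matrix.fromBlocks (A πhat) (B πhat) (B πhat)ᵀ (C πhat)).trace := by
  -- positivity of β
  have hMtM : ∀ π, ((M π)ᵀ * M π).PosSemidef := by
    intro π
    rw [← Matrix.conjTranspose_eq_transpose_of_trivial]
    exact Matrix.posSemidef_conjTranspose_mul_self (M π)
  have hβ0 : 0 ≤ β := by
    rcases isEmpty_or_nonempty (Fin p) with hp | hp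
    · have := hβ πhat
      rwa [Real.iSup_of_isEmpty] at this
    · obtain ⟨i⟩ := hp
      have h1 : 0 ≤ (Matrix.isHermitian_transpose_mul_self (M πhat)).eigenvalues i :=
        (hMtM πhat).eigenvalues_nonneg i
      have h2 : (Matrix.isHermitian_transpose_mul_self (M πhat)).eigenvalues i ≤
          ⨆ j, (Matrix.isHermitian_transpose_mul_self (M πhat)).eigenvalues j :=
        le_ciSup (Set.Finite.bddAbove (Set.finite_range _)) i
      linarith [hβ πhat, h1, h2]
  -- eigenvalue bound and the two PSD comparison matrices
  have heig : ∀ π i, (Matrix.isHermitian_transpose_mul_self (M π)).eigenvalues i ≤ β := by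
    intro π i
    exact le_trans (le_ciSup (Set.Finite.bddAbove (Set.finite_range _)) i) (hβ π)
  have hK2 : ∀ π, (β • (1 : Matrix (Fin n) (Fin n) ℝ) - M π * (M π)ᵀ).PosSemidef := by
    intro π
    exact qoed_swap_psd hβ0
      (qoed_smul_one_sub_psd (Matrix.isHermitian_transpose_mul_self (M π)) (heig π))
  -- the key factorization B C⁻¹ Bᵀ = S (M Mᵀ) S
  have hfact : ∀ π, B π * (C π)⁻¹ * (B π)ᵀ =
      (hA π).posSemidef.sqrt * (M π * (M π)ᵀ) * (hA π).posSemidef.sqrt := by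
    intro π
    set S := (hA π).posSemidef.sqrt with hSdef
    set T := (hC π).posSemidef.sqrt with hTdef
    have hSS : S * S = A π := (hA π).posSemidef.sqrt_mul_self
    have hTT : T * T = C π := (hC π).posSemidef.sqrt_mul_self
    have hSdet : IsUnit S.det := by
      have : S.det * S.det = (A π).det := by rw [← Matrix.det_mul, hSS]
      have hpos := (hA π).det_pos
      refine isUnit_iff_ne_zero.mpr fun h0 => ?_
      rw [h0, mul_zero] at this
      exact absurd this.symm (ne_of_gt hpos)
    have hTdet : IsUnit T.det := by
      have : T.det * T.det = (C π).det := by rw [← Matrix.det_mul, hTT]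
      have hpos := (hC π).det_pos
      refine isUnit_iff_ne_zero.mpr fun h0 => ?_
      rw [h0, mul_zero] at this
      exact absurd this.symm (ne_of_gt hpos)
    have hSsymm : Sᵀ = S := by
      rw [← Matrix.conjTranspose_eq_transpose_of_trivial]
      exact (hA π).posSemidef.posSemidef_sqrt.isHermitian.eq
    have hTsymm : Tᵀ = T := by
      rw [← Matrix.conjTranspose_eq_transpose_of_trivial]
      exact (hC π).posSemidef.posSemidef_sqrt.isHermitian.eq
    have hBe : B π = S * M π * T := by
      rw [hM π, ← hSdef, ← hTdef]
      symm
      calc S * (S⁻¹ * B π * T⁻¹) * T = S * (S⁻¹ * (B π * (T⁻¹ * T))) := by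
            simp only [Matrix.mul_assoc]
        _ = B π := by
            rw [Matrix.nonsing_inv_mul T hTdet, Matrix.mul_one,
              Matrix.mul_nonsing_inv_cancel_left S _ hSdet]
    have hCinv : (C π)⁻¹ = T⁻¹ * T⁻¹ := by
      rw [← hTT, Matrix.mul_inv_rev]
    have hBt : (B π)ᵀ = T * (M π)ᵀ * S := by
      rw [hBe, Matrix.transpose_mul, Matrix.transpose_mul, hSsymm, hTsymm, Matrix.mul_assoc]
    rw [hBt, hBe, hCinv]
    calc S * M π * T * (T⁻¹ * T⁻¹) * (T * (M π)ᵀ * S)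
        = S * M π * (T * T⁻¹) * (T⁻¹ * T) * ((M π)ᵀ * S) := by
          simp only [Matrix.mul_assoc]
      _ = S * (M π * (M π)ᵀ) * S := by
          rw [Matrix.mul_nonsing_inv T hTdet, Matrix.nonsing_inv_mul T hTdet,
            Matrix.mul_one, Matrix.mul_one]
          simp only [Matrix.mul_assoc]
  -- trace bounds for the cross term
  have hSsymm' : ∀ π, ((hA π).posSemidef.sqrt)ᴴ = (hA π).posSemidef.sqrt := fun π =>
    (hA π).posSemidef.posSemidef_sqrt.isHermitian.eq
  have hMMt : ∀ π, (M π * (M π)ᵀ).PosSemidef := by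
    intro π
    rw [← Matrix.conjTranspose_eq_transpose_of_trivial]
    exact Matrix.posSemidef_self_mul_conjTranspose (M π)
  have hcross_psd : ∀ π, (B π * (C π)⁻¹ * (B π)ᵀ).PosSemidef := by
    intro π
    rw [hfact π]
    have h1 := (hMMt π).mul_mul_conjTranspose_same ((hA π).posSemidef.sqrt)
    rwa [hSsymm' π] at h1
  have hcross_le : ∀ π, (B π * (C π)⁻¹ * (B π)ᵀ).trace ≤ β * (A π).trace := by
    intro π
    rw [hfact π, trace_mul_cycle, (hA π).posSemidef.sqrt_mul_self]
    have h0 := qoed_trace_mul_nonneg (hA π).posSemidef (hK2 π)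
    have hexp : (A π * (β • (1 : Matrix (Fin n) (Fin n) ℝ) - M π * (M π)ᵀ)).trace
        = β * (A π).trace - (A π * (M π * (M π)ᵀ)).trace := by
      rw [Matrix.mul_sub, Matrix.mul_smul, Matrix.mul_one, Matrix.trace_sub,
        Matrix.trace_smul, smul_eq_mul]
    linarith [hexp ▸ h0]
  -- trace positivity facts
  have htrA : ∀ π, 0 ≤ (A π).trace := fun π => qoed_trace_nonneg (hA π).posSemidef
  have htrC : ∀ π, 0 ≤ (C π).trace := fun π => qoed_trace_nonneg (hC π).posSemidef
  have htrX : ∀ π, 0 ≤ (B π * (C π)⁻¹ * (B π)ᵀ).trace := fun π =>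
    qoed_trace_nonneg (hcross_psd π)
  -- main chain
  rw [qoed_trace_fromBlocks, qoed_trace_fromBlocks]
  have h1 : (1 - β) * (A πstar).trace ≤ (A πstar - B πstar * (C πstar)⁻¹ * (B πstar)ᵀ).trace := by
    rw [Matrix.trace_sub]
    nlinarith [hcross_le πstar]
  have h2 : (A πhat - B πhat * (C πhat)⁻¹ * (B πhat)ᵀ).trace ≤ (A πhat).trace := by
    rw [Matrix.trace_sub]
    linarith [htrX πhat]
  have h3 : (1 - β) * (A πstar).trace ≤ (A πhat).trace + (C πhat).trace := by
    have := hopt πstar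
    linarith [htrC πhat]
  have hdiv : (1 - β) / (1 + η) * ((A πstar).trace + (C πstar).trace)
      ≤ (1 - β) * (A πstar).trace := by
    rw [div_mul_eq_mul_div, div_le_iff₀ (by linarith : (0:ℝ) < 1 + η)]
    have hb' : 0 ≤ 1 - β := by linarith
    nlinarith [hη πstar, htrA πstar, mul_nonneg hb' (sub_nonneg.mpr (hη πstar))]
  linarith
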